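/- arXiv:2310.04246 — 3 statements merged into one kernel-verified Lean document; each statement's English description precedes it below -/
import Mathlib

section
/- Fix α ∈ (0,1), T > 0 and F ≥ 0. There exists a constant C = C(α,T) > 0 with the following property. Let H be a real inner product space, N ≥ 1 an integer and Δt = T/N. Suppose u⁰, u¹, …, u^N ∈ H, for each n ∈ {1,…,N} a bilinear form aₙ : H × H → ℝ with aₙ(v,v) ≥ 0 for all v ∈ H, and elements gⁿ ∈ H with ‖gⁿ‖ ≤ F, satisfy ⟨δᵅuⁿ, v⟩ + aₙ(uⁿ, v) = ⟨gⁿ, v⟩ for all v ∈ H and all n ∈ {1,…,N}. Then ‖uⁿ‖ ≤ C(‖u⁰‖ + F) for all n ∈ {0,…,N}. -/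
open RealInnerProductSpace

/-- The L1 weights `b_j(β) = j^β - (j-1)^β`. -/
noncomputable def bcoef (β : ℝ) (j : ℕ) : ℝ := (j : ℝ) ^ β - ((j : ℝ) - 1) ^ β

/-- The L1 discretization of the Caputo derivative of order `α` with time step `Δt`,
applied to a sequence `y` in a real vector space, evaluated at step `n`:
`δᵅyⁿ = ((Δt)^{−α}/Γ(2−α)) Σ_{i=0}^{n−1} b_{n−i}(1−α)(y^{i+1} − yⁱ)`. -/
noncomputable def L1delta {H : Type*} [AddCommGroup H] [Module ℝ H]
    (α Δt : ℝ) (y : ℕ → H) (n : ℕ) : H :=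
  (Δt ^ (-α) / Real.Gamma (2 - α)) •
    ∑ i ∈ Finset.range n, bcoef (1 - α) (n - i) • (y (i + 1) - y i)

/-!
Testing the scheme with `v = uⁿ` and dropping `aₙ(uⁿ, uⁿ) ≥ 0` gives `⟪δᵅuⁿ, uⁿ⟫ ≤ F ‖uⁿ‖`.
Summation by parts writes `δᵅuⁿ = κ (uⁿ - bₙ u⁰ - ∑_{0<j<n} (b_{n-j} - b_{n-j+1}) uʲ)` with
`κ = Δt^{-α} / Γ(2-α)`; by concavity of `x ↦ x^{1-α}` the weights `b_{n-j} - b_{n-j+1}` are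
nonnegative, and they telescope to `1 - bₙ`. Cauchy–Schwarz then gives
`‖uⁿ‖ ≤ bₙ ‖u⁰‖ + ∑_{0<j<n} (b_{n-j} - b_{n-j+1}) ‖uʲ‖ + F/κ`, and since `bₙ` is decreasing a
strong induction yields `‖uⁿ‖ ≤ ‖u⁰‖ + (F/κ) / bₙ`. Finally Bernoulli's inequality gives
`bₙ ≥ (1-α) n^{-α}`, so `(F/κ) / bₙ ≤ Γ(2-α) (nΔt)^α F / (1-α) ≤ Γ(2-α) T^α F / (1-α)`.
-/

open Finset

section

variable {β : ℝ}

lemma bcoef_one (hβ : 0 < β) : bcoef β 1 = 1 := by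
  simp [bcoef, Real.zero_rpow hβ.ne']

lemma bcoef_pos (hβ : 0 < β) {j : ℕ} (hj : 1 ≤ j) : 0 < bcoef β j := by
  have hj' : (1 : ℝ) ≤ j := by exact_mod_cast hj
  exact sub_pos.2 (Real.rpow_lt_rpow (by linarith) (by linarith) hβ)

lemma bcoef_succ_le (hβ₀ : 0 ≤ β) (hβ₁ : β ≤ 1) {j : ℕ} (hj : 1 ≤ j) :
    bcoef β (j + 1) ≤ bcoef β j := by
  have hj' : (1 : ℝ) ≤ j := by exact_mod_cast hj
  have h := (Real.concaveOn_rpow hβ₀ hβ₁).slope_anti_adjacent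
    (x := (j : ℝ) - 1) (y := j) (z := j + 1)
    (Set.mem_Ici.2 (by linarith)) (Set.mem_Ici.2 (by linarith)) (by linarith) (by linarith)
  simp only [add_sub_cancel_left, sub_sub_cancel, div_one] at h
  simpa [bcoef] using h

lemma bcoef_antitoneOn (hβ₀ : 0 ≤ β) (hβ₁ : β ≤ 1) : AntitoneOn (bcoef β) {j | 1 ≤ j} :=
  antitoneOn_nat_Ici_of_succ_le fun _ hj ↦ bcoef_succ_le hβ₀ hβ₁ hj

lemma bcoef_mul_rpow_sub_one_le (hβ₀ : 0 ≤ β) (hβ₁ : β ≤ 1) {n : ℕ} (hn : 1 ≤ n) :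
    β * (n : ℝ) ^ (β - 1) ≤ bcoef β n := by
  have hn' : (1 : ℝ) ≤ n := by exact_mod_cast hn
  have hn₀ : (0 : ℝ) < n := by linarith
  have bernoulli := rpow_one_add_le_one_add_mul_self
    (s := -(n : ℝ)⁻¹) (by linarith [inv_le_one_of_one_le₀ hn']) hβ₀ hβ₁
  have hfactor : (n : ℝ) - 1 = n * (1 + -(n : ℝ)⁻¹) := by field_simp; ring
  rw [bcoef, hfactor, Real.mul_rpow hn₀.le (by linarith [inv_le_one_of_one_le₀ hn']),
    Real.rpow_sub_one hn₀.ne']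
  have := mul_le_mul_of_nonneg_left bernoulli (Real.rpow_nonneg hn₀.le β)
  calc β * ((n : ℝ) ^ β / n) = (n : ℝ) ^ β - (n : ℝ) ^ β * (1 + β * -(n : ℝ)⁻¹) := by ring
    _ ≤ _ := by linarith

end

theorem sum_range_smul_sub_by_parts {M : Type*} [AddCommGroup M] [Module ℝ M] (w : ℕ → ℝ)
    (u : ℕ → M) {n : ℕ} (hn : 0 < n) :
    ∑ i ∈ range n, w (n - i) • (u (i + 1) - u i) =
      w 1 • u n - w n • u 0 - ∑ j ∈ Ico 1 n, (w (n - j) - w (n - j + 1)) • u j := by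
  obtain ⟨n, rfl⟩ := Nat.exists_eq_add_of_lt hn
  clear hn
  simp only [zero_add]
  induction n generalizing w with
  | zero => simp [smul_sub]
  | succ n ih =>
    have hshift : ∀ i ∈ range (n + 1), w (n + 1 + 1 - i) = w (n + 1 - i + 1) := by
      intro i hi
      rw [mem_range] at hi
      congr 1
      omega
    have hshift' : ∀ j ∈ Ico 1 (n + 1), w (n + 1 + 1 - j) - w (n + 1 + 1 - j + 1) =
        w (n + 1 - j + 1) - w (n + 1 - j + 1 + 1) := by
      intro j hj
      rw [mem_Ico] at hj
      congr 2 <;> omega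
    rw [sum_range_succ, sum_congr rfl fun i hi ↦ by rw [hshift i hi],
      ih (fun k ↦ w (k + 1))]
    conv_rhs => rw [sum_Ico_succ_top (show 1 ≤ n + 1 by omega),
      sum_congr rfl fun j hj ↦ by rw [hshift' j hj]]
    simp only [Nat.add_sub_cancel_left, smul_sub, sub_smul]
    abel

theorem sum_Ico_sub_eq_sub (w : ℕ → ℝ) {n : ℕ} (hn : 0 < n) :
    ∑ j ∈ Ico 1 n, (w (n - j) - w (n - j + 1)) = w 1 - w n := by
  have h := sum_range_smul_sub_by_parts w (fun _ ↦ (1 : ℝ)) hn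
  simp only [sub_self, smul_eq_mul, mul_zero, sum_const_zero, mul_one] at h
  linarith

theorem le_add_div_of_le_mul_add_sum (w : ℕ → ℝ) (hw_pos : ∀ n, 1 ≤ n → 0 < w n)
    (hw_anti : AntitoneOn w {n | 1 ≤ n}) (hw_one : w 1 = 1) {E : ℝ} (hE : 0 ≤ E)
    (x : ℕ → ℝ) {N : ℕ}
    (hx : ∀ n, 1 ≤ n → n ≤ N →
      x n ≤ w n * x 0 + ∑ j ∈ Ico 1 n, (w (n - j) - w (n - j + 1)) * x j + E) :
    ∀ n, 1 ≤ n → n ≤ N → x n ≤ x 0 + E / w n := by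
  intro n
  induction n using Nat.strong_induction_on with
  | _ n ih =>
  intro hn hnN
  have hwn := hw_pos n hn
  have hhist : ∑ j ∈ Ico 1 n, (w (n - j) - w (n - j + 1)) * x j ≤
      (1 - w n) * (x 0 + E / w n) := by
    rw [← hw_one, ← sum_Ico_sub_eq_sub w hn, sum_mul]
    refine sum_le_sum fun j hj ↦ ?_
    rw [mem_Ico] at hj
    have hcoef : 0 ≤ w (n - j) - w (n - j + 1) :=
      sub_nonneg.2 (hw_anti (by simp; omega) (by simp) (by omega))
    have hwj : w n ≤ w j := hw_anti (by simpa using hj.1) (by simpa using hn) hj.2.le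
    have hxj : x j ≤ x 0 + E / w n :=
      (ih j hj.2 hj.1 (by omega)).trans
        (add_le_add_right (div_le_div_of_nonneg_left hE hwn hwj) _)
    exact mul_le_mul_of_nonneg_left hxj hcoef
  calc x n ≤ w n * x 0 + (1 - w n) * (x 0 + E / w n) + E := by linarith [hx n hn hnN]
    _ = x 0 + E / w n := by field_simp; ring

theorem rpow_div_div_bcoef_le {α T : ℝ} (hα₀ : 0 ≤ α) (hα₁ : α < 1) (hT : 0 ≤ T) {N n : ℕ}
    (hn : 1 ≤ n) (hnN : n ≤ N) : (T / N) ^ α / bcoef (1 - α) n ≤ T ^ α / (1 - α) := by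
  have hn₀ : (0 : ℝ) < n := by exact_mod_cast hn
  have hN₀ : (0 : ℝ) < N := by exact_mod_cast hn.trans hnN
  have hlower := bcoef_mul_rpow_sub_one_le (β := 1 - α) (by linarith) (by linarith) hn
  rw [sub_sub_cancel_left, Real.rpow_neg hn₀.le] at hlower
  have hstep : T / N * n ≤ T := by
    rw [div_mul_eq_mul_div, div_le_iff₀ hN₀]
    exact mul_le_mul_of_nonneg_left (by exact_mod_cast hnN) hT
  calc (T / N) ^ α / bcoef (1 - α) n ≤ (T / N) ^ α / ((1 - α) * ((n : ℝ) ^ α)⁻¹) := by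
        gcongr
    _ = (T / N * n) ^ α / (1 - α) := by
        rw [Real.mul_rpow (by positivity) hn₀.le]
        field_simp
    _ ≤ T ^ α / (1 - α) := by
        gcongr

theorem inner_L1delta_self_ge {H : Type*} [NormedAddCommGroup H] [InnerProductSpace ℝ H]
    {α Δt : ℝ} (hα₀ : 0 ≤ α) (hα₁ : α < 1) (hΔt : 0 ≤ Δt) (y : ℕ → H) {n : ℕ} (hn : 0 < n) :
    Δt ^ (-α) / Real.Gamma (2 - α) * ‖y n‖ * (‖y n‖ - (bcoef (1 - α) n * ‖y 0‖ +
      ∑ j ∈ Ico 1 n, (bcoef (1 - α) (n - j) - bcoef (1 - α) (n - j + 1)) * ‖y j‖)) ≤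
      ⟪L1delta α Δt y n, y n⟫ := by
  have hκ : 0 ≤ Δt ^ (-α) / Real.Gamma (2 - α) :=
    div_nonneg (Real.rpow_nonneg hΔt _) (Real.Gamma_pos_of_pos (by linarith)).le
  have hexpand : ⟪L1delta α Δt y n, y n⟫ = Δt ^ (-α) / Real.Gamma (2 - α) *
      (‖y n‖ ^ 2 - bcoef (1 - α) n * ⟪y 0, y n⟫ -
        ∑ j ∈ Ico 1 n, (bcoef (1 - α) (n - j) - bcoef (1 - α) (n - j + 1)) * ⟪y j, y n⟫) := by
    rw [L1delta, sum_range_smul_sub_by_parts _ _ hn, bcoef_one (by linarith), one_smul,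
      real_inner_smul_left, inner_sub_left, inner_sub_left, real_inner_smul_left, sum_inner,
      real_inner_self_eq_norm_sq]
    simp only [real_inner_smul_left]
  have hhist : ∑ j ∈ Ico 1 n, (bcoef (1 - α) (n - j) - bcoef (1 - α) (n - j + 1)) * ⟪y j, y n⟫ ≤
      (∑ j ∈ Ico 1 n, (bcoef (1 - α) (n - j) - bcoef (1 - α) (n - j + 1)) * ‖y j‖) * ‖y n‖ := by
    rw [sum_mul]
    refine sum_le_sum fun j hj ↦ ?_
    rw [mem_Ico] at hj
    have hcoef : 0 ≤ bcoef (1 - α) (n - j) - bcoef (1 - α) (n - j + 1) :=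
      sub_nonneg.2 (bcoef_succ_le (by linarith) (by linarith) (by omega))
    rw [mul_assoc]
    exact mul_le_mul_of_nonneg_left (real_inner_le_norm _ _) hcoef
  have hfirst : bcoef (1 - α) n * ⟪y 0, y n⟫ ≤ bcoef (1 - α) n * (‖y 0‖ * ‖y n‖) :=
    mul_le_mul_of_nonneg_left (real_inner_le_norm _ _) (bcoef_pos (by linarith) hn).le
  rw [hexpand, mul_assoc]
  gcongr
  linarith

theorem norm_le_of_inner_L1delta_le {H : Type*} [NormedAddCommGroup H] [InnerProductSpace ℝ H]
    {α Δt F : ℝ} (hα₀ : 0 ≤ α) (hα₁ : α < 1) (hΔt : 0 < Δt) (hF : 0 ≤ F) (y : ℕ → H) {n : ℕ}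
    (hn : 0 < n) (h : ⟪L1delta α Δt y n, y n⟫ ≤ F * ‖y n‖) :
    ‖y n‖ ≤ bcoef (1 - α) n * ‖y 0‖ +
      ∑ j ∈ Ico 1 n, (bcoef (1 - α) (n - j) - bcoef (1 - α) (n - j + 1)) * ‖y j‖ +
      F * Real.Gamma (2 - α) * Δt ^ α := by
  set S := bcoef (1 - α) n * ‖y 0‖ +
    ∑ j ∈ Ico 1 n, (bcoef (1 - α) (n - j) - bcoef (1 - α) (n - j + 1)) * ‖y j‖
  have hΓ : 0 < Real.Gamma (2 - α) := Real.Gamma_pos_of_pos (by linarith)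
  have hκ : Δt ^ (-α) / Real.Gamma (2 - α) = (Real.Gamma (2 - α) * Δt ^ α)⁻¹ := by
    rw [Real.rpow_neg hΔt.le, mul_inv, div_eq_mul_inv, mul_comm]
  rcases (norm_nonneg (y n)).eq_or_lt with h0 | hpos
  · have hS : 0 ≤ S := add_nonneg
      (mul_nonneg (bcoef_pos (by linarith) hn).le (norm_nonneg _))
      (sum_nonneg fun j hj ↦ mul_nonneg
        (sub_nonneg.2 (bcoef_succ_le (by linarith) (by linarith) (by simp at hj; omega)))
        (norm_nonneg _))
    rw [← h0]
    positivity
  · have hlow := (inner_L1delta_self_ge hα₀ hα₁ hΔt.le y hn).trans h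
    rw [hκ, mul_right_comm] at hlow
    have := le_of_mul_le_mul_right hlow hpos
    rw [inv_mul_le_iff₀ (by positivity)] at this
    linarith

/-- Stability of the fully discrete L1–Galerkin scheme (paper's Theorem 1, abstract form). -/
theorem stmt_0 (α T : ℝ) (hα : α ∈ Set.Ioo (0 : ℝ) 1) (hT : 0 < T) :
    ∃ C : ℝ, 0 < C ∧
      ∀ (F : ℝ), 0 ≤ F →
      ∀ (H : Type) [NormedAddCommGroup H] [InnerProductSpace ℝ H],
      ∀ (N : ℕ), 1 ≤ N →
      ∀ (u g : ℕ → H) (a : ℕ → H →ₗ[ℝ] H →ₗ[ℝ] ℝ),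
        (∀ n, n ∈ Finset.Icc 1 N → ∀ v : H, 0 ≤ a n v v) →
        (∀ n, n ∈ Finset.Icc 1 N → ‖g n‖ ≤ F) →
        (∀ n, n ∈ Finset.Icc 1 N → ∀ v : H,
          ⟪L1delta α (T / (N : ℝ)) u n, v⟫ + a n (u n) v = ⟪g n, v⟫) →
        ∀ n, n ≤ N → ‖u n‖ ≤ C * (‖u 0‖ + F) := by
  obtain ⟨hα₀, hα₁⟩ := hα
  have hΓ : 0 < Real.Gamma (2 - α) := Real.Gamma_pos_of_pos (by linarith)
  have hK : 0 ≤ Real.Gamma (2 - α) * T ^ α / (1 - α) :=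
    div_nonneg (mul_nonneg hΓ.le (by positivity)) (by linarith)
  refine ⟨1 + Real.Gamma (2 - α) * T ^ α / (1 - α), by linarith, ?_⟩
  intro F hF H _ _ N hN u g a ha hg hsch n hnN
  have hΔt : 0 < T / N := div_pos hT (by exact_mod_cast hN)
  have henergy : ∀ m, 1 ≤ m → m ≤ N → ⟪L1delta α (T / N) u m, u m⟫ ≤ F * ‖u m‖ := by
    intro m hm hmN
    have hmem : m ∈ Icc 1 N := mem_Icc.2 ⟨hm, hmN⟩
    calc ⟪L1delta α (T / N) u m, u m⟫ ≤ ⟪g m, u m⟫ := by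
          linarith [hsch m hmem (u m), ha m hmem (u m)]
      _ ≤ ‖g m‖ * ‖u m‖ := real_inner_le_norm _ _
      _ ≤ F * ‖u m‖ := mul_le_mul_of_nonneg_right (hg m hmem) (norm_nonneg _)
  have hstab := le_add_div_of_le_mul_add_sum (bcoef (1 - α))
    (fun m hm ↦ bcoef_pos (by linarith) hm) (bcoef_antitoneOn (by linarith) (by linarith))
    (bcoef_one (by linarith)) (mul_nonneg (mul_nonneg hF hΓ.le) (by positivity)) (fun m ↦ ‖u m‖)
    (fun m hm hmN ↦ norm_le_of_inner_L1delta_le hα₀.le hα₁ hΔt hF u hm (henergy m hm hmN))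
  rcases n.eq_zero_or_pos with rfl | hn
  · nlinarith [norm_nonneg (u 0)]
  calc ‖u n‖ ≤ ‖u 0‖ + F * Real.Gamma (2 - α) * (T / N) ^ α / bcoef (1 - α) n :=
        hstab n hn hnN
    _ ≤ ‖u 0‖ + F * (Real.Gamma (2 - α) * T ^ α / (1 - α)) := by
        have := mul_le_mul_of_nonneg_left (rpow_div_div_bcoef_le hα₀.le hα₁ hT.le hn hnN)
          (mul_nonneg hF hΓ.le)
        rw [mul_div_assoc, mul_div_assoc (Real.Gamma _), ← mul_assoc]
        linarith
    _ ≤ (1 + Real.Gamma (2 - α) * T ^ α / (1 - α)) * (‖u 0‖ + F) := by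
        nlinarith [mul_nonneg hK (norm_nonneg (u 0))]
end

section
/- Let α ∈ (0,1) and C₀ > 0, and let y : [0,∞) → ℝ be continuous on [0,∞), differentiable on (0,∞), with |y′(t)| ≤ C₀(1 + t^{α−1}) for all t > 0. Then there exists a constant C = C(α, C₀) > 0 such that for every Δt > 0 and every integer n ≥ 2, with tₖ = kΔt, the extrapolation ŷ(tₙ) = 2y(t_{n−1}) − y(t_{n−2}) satisfies |ŷ(tₙ) − y(tₙ)| ≤ C(1 + tₙ^{α−1})Δt, equivalently |ŷ(tₙ) − y(tₙ)| ≤ C(Δt + (Δt)^α n^{α−1}). -/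
open Set MeasureTheory intervalIntegral

private lemma aux_mvt {α C₀ : ℝ} (hα : α ∈ Set.Ioo (0:ℝ) 1) (hC₀ : 0 < C₀)
    {y : ℝ → ℝ}
    (hdiff : ∀ t : ℝ, 0 < t → DifferentiableAt ℝ y t)
    (hbound : ∀ t : ℝ, 0 < t → |deriv y t| ≤ C₀ * (1 + t ^ (α - 1)))
    {a b : ℝ} (ha : 0 < a) (hab : a ≤ b) :
    |y b - y a| ≤ C₀ * (1 + a ^ (α - 1)) * (b - a) := by
  have key := Convex.norm_image_sub_le_of_norm_hasDerivWithin_le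
    (f := y) (f' := fun x => deriv y x) (C := C₀ * (1 + a ^ (α - 1))) (s := Icc a b)
    (fun x hx => ((hdiff x (lt_of_lt_of_le ha hx.1)).hasDerivAt).hasDerivWithinAt)
    (fun x hx => by
      have hx0 : 0 < x := lt_of_lt_of_le ha hx.1
      have h1 : x ^ (α - 1) ≤ a ^ (α - 1) :=
        Real.rpow_le_rpow_of_nonpos ha hx.1 (by linarith [hα.2])
      have h2 := hbound x hx0
      rw [Real.norm_eq_abs]
      nlinarith)
    (convex_Icc a b) (left_mem_Icc.2 hab) (right_mem_Icc.2 hab)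
  rw [Real.norm_eq_abs, Real.norm_eq_abs, abs_of_nonneg (by linarith : (0:ℝ) ≤ b - a)] at key
  exact key

private lemma aux_ftc {α C₀ : ℝ} (hα : α ∈ Set.Ioo (0:ℝ) 1) (hC₀ : 0 < C₀)
    {y : ℝ → ℝ}
    (hcont : ContinuousOn y (Set.Ici (0 : ℝ)))
    (hdiff : ∀ t : ℝ, 0 < t → DifferentiableAt ℝ y t)
    (hbound : ∀ t : ℝ, 0 < t → |deriv y t| ≤ C₀ * (1 + t ^ (α - 1)))
    {b : ℝ} (hb : 0 < b) :
    |y b - y 0| ≤ C₀ * (b + b ^ α / α) := by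
  set g : ℝ → ℝ := fun t => C₀ * (1 + t ^ (α - 1)) with hg
  have hgint : IntervalIntegrable g volume 0 b := by
    apply IntervalIntegrable.const_mul
    exact intervalIntegrable_const.add (intervalIntegrable_rpow' (by linarith [hα.1]))
  have hmeas : AEStronglyMeasurable (deriv y) (volume.restrict (Ioc (0:ℝ) b)) :=
    (measurable_deriv y).aestronglyMeasurable.restrict
  have haebound : ∀ᵐ t ∂(volume.restrict (Ioc (0:ℝ) b)), ‖deriv y t‖ ≤ g t := by
    rw [ae_restrict_iff' measurableSet_Ioc]
    exact ae_of_all _ fun t ht => by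
      rw [Real.norm_eq_abs]; exact hbound t ht.1
  have hint : IntervalIntegrable (deriv y) volume 0 b := by
    rw [intervalIntegrable_iff_integrableOn_Ioc_of_le hb.le]
    have h1 : IntegrableOn g (Ioc (0:ℝ) b) := hgint.1
    exact MeasureTheory.Integrable.mono h1 hmeas
      (haebound.mono fun t ht => ht.trans (le_abs_self _))
  have hftc : ∫ t in (0:ℝ)..b, deriv y t = y b - y 0 :=
    integral_eq_sub_of_hasDeriv_right_of_le hb.le
      (hcont.mono Icc_subset_Ici_self)
      (fun x hx => ((hdiff x hx.1).hasDerivAt).hasDerivWithinAt) hint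
  have hmono : ∫ t in (0:ℝ)..b, ‖deriv y t‖ ≤ ∫ t in (0:ℝ)..b, g t := by
    apply integral_mono_ae_restrict hb.le hint.norm hgint
    have h0 : ∀ᵐ t : ℝ ∂volume, t ≠ 0 := by
      rw [ae_iff]
      simpa using Real.volume_singleton (x := (0:ℝ))
    have hmem : ∀ᵐ t ∂(volume.restrict (Icc (0:ℝ) b)), t ∈ Icc (0:ℝ) b :=
      ae_restrict_mem measurableSet_Icc
    filter_upwards [hmem, ae_restrict_of_ae h0] with t ht ht0
    have ht' : 0 < t := lt_of_le_of_ne ht.1 (Ne.symm ht0)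
    rw [Real.norm_eq_abs]
    exact hbound t ht'
  have hval : ∫ t in (0:ℝ)..b, g t = C₀ * (b + b ^ α / α) := by
    rw [hg]
    rw [intervalIntegral.integral_const_mul,
      intervalIntegral.integral_add intervalIntegrable_const
        (intervalIntegrable_rpow' (by linarith [hα.1])),
      intervalIntegral.integral_const, integral_rpow (Or.inl (by linarith [hα.1])),
      sub_add_cancel, Real.zero_rpow (ne_of_gt hα.1)]
    simp
  calc |y b - y 0| = |∫ t in (0:ℝ)..b, deriv y t| := by rw [hftc]
    _ ≤ ∫ t in (0:ℝ)..b, ‖deriv y t‖ := by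
        simpa [Real.norm_eq_abs] using
          intervalIntegral.norm_integral_le_integral_norm (f := deriv y) hb.le
    _ ≤ ∫ t in (0:ℝ)..b, g t := hmono
    _ = C₀ * (b + b ^ α / α) := hval

private lemma aux_shrink {α : ℝ} (hα : α ∈ Set.Ioo (0:ℝ) 1) {a x c : ℝ}
    (hx : 0 < x) (ha : 0 < a) (hc : 1 ≤ c) (hxa : x ≤ c * a) :
    a ^ (α - 1) ≤ c * x ^ (α - 1) := by
  have hc0 : 0 < c := lt_of_lt_of_le one_pos hc
  have h1 : x / c ≤ a := (div_le_iff₀' hc0).2 hxa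
  have h2 : a ^ (α - 1) ≤ (x / c) ^ (α - 1) :=
    Real.rpow_le_rpow_of_nonpos (by positivity) h1 (by linarith [hα.2])
  have h4 : (c ^ (α - 1))⁻¹ = c ^ (1 - α) := by
    rw [← Real.rpow_neg hc0.le, neg_sub]
  have h5 : c ^ (1 - α) ≤ c := by
    calc c ^ (1 - α) ≤ c ^ (1:ℝ) :=
          Real.rpow_le_rpow_of_exponent_le hc (by linarith [hα.1])
      _ = c := Real.rpow_one c
  have hxp : 0 ≤ x ^ (α - 1) := Real.rpow_nonneg hx.le _
  calc a ^ (α - 1) ≤ (x / c) ^ (α - 1) := h2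
    _ = x ^ (α - 1) * (c ^ (α - 1))⁻¹ := by
        rw [Real.div_rpow hx.le hc0.le, div_eq_mul_inv]
    _ = x ^ (α - 1) * c ^ (1 - α) := by rw [h4]
    _ ≤ x ^ (α - 1) * c := mul_le_mul_of_nonneg_left h5 hxp
    _ = c * x ^ (α - 1) := mul_comm _ _

set_option maxHeartbeats 1000000 in
/-- Extrapolation error bound (paper's Lemma 1): if `|y′(t)| ≤ C₀(1 + t^{α−1})` on `(0,∞)`,
then the linear extrapolation `ŷ(tₙ) = 2y(t_{n−1}) − y(t_{n−2})` satisfies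
`|ŷ(tₙ) − y(tₙ)| ≤ C(1 + tₙ^{α−1})Δt`. -/
theorem stmt_1 (α C₀ : ℝ) (hα : α ∈ Set.Ioo (0 : ℝ) 1) (hC₀ : 0 < C₀)
    (y : ℝ → ℝ)
    (hcont : ContinuousOn y (Set.Ici (0 : ℝ)))
    (hdiff : ∀ t : ℝ, 0 < t → DifferentiableAt ℝ y t)
    (hbound : ∀ t : ℝ, 0 < t → |deriv y t| ≤ C₀ * (1 + t ^ (α - 1))) :
    ∃ C : ℝ, 0 < C ∧
      ∀ (Δt : ℝ), 0 < Δt → ∀ (n : ℕ), 2 ≤ n →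
        |2 * y (((n : ℝ) - 1) * Δt) - y (((n : ℝ) - 2) * Δt) - y ((n : ℝ) * Δt)|
          ≤ C * (1 + ((n : ℝ) * Δt) ^ (α - 1)) * Δt := by
  obtain ⟨hα0, hα1⟩ := hα
  refine ⟨C₀ * (5 + 2 / α), by positivity, ?_⟩
  intro Δt hΔt n hn
  have hn2 : (2:ℝ) ≤ (n:ℝ) := by exact_mod_cast hn
  have hT0 : 0 < (n:ℝ) * Δt := by nlinarith
  have hTp : 0 ≤ ((n:ℝ) * Δt) ^ (α - 1) := Real.rpow_nonneg hT0.le _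
  -- bound for the second increment
  have ha1 : 0 < ((n:ℝ) - 1) * Δt := by nlinarith
  have hab1 : ((n:ℝ) - 1) * Δt ≤ (n:ℝ) * Δt := by nlinarith
  have hB0 := aux_mvt ⟨hα0, hα1⟩ hC₀ hdiff hbound ha1 hab1
  have hdiff1 : (n:ℝ) * Δt - ((n:ℝ) - 1) * Δt = Δt := by ring
  rw [hdiff1] at hB0
  have hsh1 : (((n:ℝ) - 1) * Δt) ^ (α - 1) ≤ 2 * ((n:ℝ) * Δt) ^ (α - 1) :=
    aux_shrink ⟨hα0, hα1⟩ hT0 ha1 (by norm_num) (by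
      have h := mul_le_mul_of_nonneg_right (show (n:ℝ) ≤ 2 * ((n:ℝ) - 1) by linarith) hΔt.le
      linarith)
  have hB : |y ((n:ℝ) * Δt) - y (((n:ℝ) - 1) * Δt)| ≤
      2 * C₀ * (1 + ((n:ℝ) * Δt) ^ (α - 1)) * Δt := by
    nlinarith [mul_le_mul_of_nonneg_left (mul_le_mul_of_nonneg_right hsh1 hΔt.le) hC₀.le,
      mul_pos hC₀ hΔt, mul_nonneg (mul_nonneg hC₀.le hTp) hΔt.le]
  -- bound for the first increment
  have hA : |y (((n:ℝ) - 1) * Δt) - y (((n:ℝ) - 2) * Δt)| ≤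
      (3 + 2 / α) * C₀ * (1 + ((n:ℝ) * Δt) ^ (α - 1)) * Δt := by
    rcases eq_or_lt_of_le hn2 with h2 | h3
    · -- n = 2
      have hz : ((n:ℝ) - 2) * Δt = 0 := by rw [← h2]; ring
      have hone : ((n:ℝ) - 1) * Δt = Δt := by rw [← h2]; ring
      rw [hz, hone]
      have hF := aux_ftc ⟨hα0, hα1⟩ hC₀ hcont hdiff hbound hΔt
      have hpow : Δt ^ α = Δt ^ (α - 1) * Δt := by
        conv_lhs => rw [show α = α - 1 + 1 by ring]
        rw [Real.rpow_add hΔt, Real.rpow_one]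
      have hsh2 : Δt ^ (α - 1) ≤ 2 * ((n:ℝ) * Δt) ^ (α - 1) :=
        aux_shrink ⟨hα0, hα1⟩ hT0 hΔt (by norm_num) (by rw [← h2])
      have hinv : 0 < 1 / α := by positivity
      calc |y Δt - y 0| ≤ C₀ * (Δt + Δt ^ α / α) := hF
        _ = C₀ * Δt + (1 / α) * C₀ * (Δt ^ (α - 1) * Δt) := by rw [hpow]; ring
        _ ≤ C₀ * Δt + (1 / α) * C₀ * ((2 * ((n:ℝ) * Δt) ^ (α - 1)) * Δt) := by
            have : Δt ^ (α - 1) * Δt ≤ (2 * ((n:ℝ) * Δt) ^ (α - 1)) * Δt :=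
              mul_le_mul_of_nonneg_right hsh2 hΔt.le
            nlinarith [mul_le_mul_of_nonneg_left this
              (by positivity : (0:ℝ) ≤ 1 / α * C₀)]
        _ ≤ (3 + 2 / α) * C₀ * (1 + ((n:ℝ) * Δt) ^ (α - 1)) * Δt := by
            have h1 : 0 < C₀ * Δt := mul_pos hC₀ hΔt
            have h2' : 0 ≤ C₀ * ((n:ℝ) * Δt) ^ (α - 1) * Δt := by positivity
            have h4 : 0 ≤ 1 / α * C₀ * Δt := by positivity
            have key : (3 + 2 / α) * C₀ * (1 + ((n:ℝ) * Δt) ^ (α - 1)) * Δt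
                - (C₀ * Δt + (1 / α) * C₀ * ((2 * ((n:ℝ) * Δt) ^ (α - 1)) * Δt))
                = 2 * (C₀ * Δt) + 3 * (C₀ * ((n:ℝ) * Δt) ^ (α - 1) * Δt)
                  + 2 * (1 / α * C₀ * Δt) := by
              field_simp
              ring
            linarith
    · -- n ≥ 3
      have hn3 : (3:ℝ) ≤ (n:ℝ) := by
        have : (2:ℕ) < n := by exact_mod_cast h3
        exact_mod_cast this
      have ha2 : 0 < ((n:ℝ) - 2) * Δt := by nlinarith
      have hab2 : ((n:ℝ) - 2) * Δt ≤ ((n:ℝ) - 1) * Δt := by nlinarith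
      have hM := aux_mvt ⟨hα0, hα1⟩ hC₀ hdiff hbound ha2 hab2
      have hd2 : ((n:ℝ) - 1) * Δt - ((n:ℝ) - 2) * Δt = Δt := by ring
      rw [hd2] at hM
      have hsh3 : (((n:ℝ) - 2) * Δt) ^ (α - 1) ≤ 3 * ((n:ℝ) * Δt) ^ (α - 1) :=
        aux_shrink ⟨hα0, hα1⟩ hT0 ha2 (by norm_num) (by
          have h := mul_le_mul_of_nonneg_right (show (n:ℝ) ≤ 3 * ((n:ℝ) - 2) by linarith) hΔt.le
          linarith)
      have hinv : 0 < 1 / α := by positivity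
      have s1 : C₀ * (1 + (((n:ℝ) - 2) * Δt) ^ (α - 1)) * Δt
          ≤ C₀ * (1 + 3 * ((n:ℝ) * Δt) ^ (α - 1)) * Δt := by
        have h := mul_le_mul_of_nonneg_right
          (mul_le_mul_of_nonneg_left
            (show 1 + (((n:ℝ) - 2) * Δt) ^ (α - 1) ≤ 1 + 3 * ((n:ℝ) * Δt) ^ (α - 1) by
              linarith) hC₀.le) hΔt.le
        linarith
      have h1 : 0 < C₀ * Δt := mul_pos hC₀ hΔt
      have h4 : 0 ≤ 1 / α * C₀ * Δt := by positivity
      have h5 : 0 ≤ 1 / α * C₀ * ((n:ℝ) * Δt) ^ (α - 1) * Δt := by positivity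
      have key : (3 + 2 / α) * C₀ * (1 + ((n:ℝ) * Δt) ^ (α - 1)) * Δt
          - C₀ * (1 + 3 * ((n:ℝ) * Δt) ^ (α - 1)) * Δt
          = 2 * (C₀ * Δt) + 2 * (1 / α * C₀ * Δt)
            + 2 * (1 / α * C₀ * ((n:ℝ) * Δt) ^ (α - 1) * Δt) := by
        field_simp
        ring
      linarith
  have hsplit : 2 * y (((n:ℝ) - 1) * Δt) - y (((n:ℝ) - 2) * Δt) - y ((n:ℝ) * Δt)
      = (y (((n:ℝ) - 1) * Δt) - y (((n:ℝ) - 2) * Δt)) - (y ((n:ℝ) * Δt) - y (((n:ℝ) - 1) * Δt)) := by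
    ring
  rw [hsplit]
  have htri := abs_sub (y (((n:ℝ) - 1) * Δt) - y (((n:ℝ) - 2) * Δt))
    (y ((n:ℝ) * Δt) - y (((n:ℝ) - 1) * Δt))
  have hsum : (3 + 2 / α) * C₀ * (1 + ((n:ℝ) * Δt) ^ (α - 1)) * Δt
      + 2 * C₀ * (1 + ((n:ℝ) * Δt) ^ (α - 1)) * Δt
      = C₀ * (5 + 2 / α) * (1 + ((n:ℝ) * Δt) ^ (α - 1)) * Δt := by ring
  linarith [htri, hA, hB, hsum]
end

section
/- Let α ∈ (0,1), C₀ > 0, Δt > 0 and n ≥ 2 an integer, with tₖ = kΔt. Let y : [0,∞) → ℝ be continuous on [0,∞), differentiable on (0,∞), with |y′(t)| ≤ C₀(1 + t^{α−1}) for all t > 0. Then |2y(t_{n−1}) − y(t_{n−2}) − y(tₙ)| ≤ 2C₀Δt + (C₀/α)(tₙ^α − t_{n−2}^α). -/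
/-!
Both `t ↦ F t - y t` and `t ↦ F t + y t` are monotone on `[0, ∞)`, where
`F t = C₀ t + (C₀ / α) t ^ α` is an antiderivative of the bound `C₀ (1 + t ^ (α - 1))` on `|y'|`.
Hence `|y v - y u| ≤ F v - F u` for `0 ≤ u ≤ v`, and the second difference is bounded by the
sum of two such increments, which telescopes to `F tₙ - F t_{n-2}`.
-/

open Set

theorem abs_sub_le_sub_of_abs_deriv_le_deriv {D : Set ℝ} (hD : Convex ℝ D) {f g : ℝ → ℝ}
    (hf : ContinuousOn f D) (hg : ContinuousOn g D)
    (hf' : DifferentiableOn ℝ f (interior D)) (hg' : DifferentiableOn ℝ g (interior D))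
    (hfg : ∀ t ∈ interior D, |deriv f t| ≤ deriv g t) {u v : ℝ} (hu : u ∈ D) (hv : v ∈ D)
    (huv : u ≤ v) : |f v - f u| ≤ g v - g u := by
  have hdiff : ∀ t ∈ interior D, DifferentiableAt ℝ f t ∧ DifferentiableAt ℝ g t :=
    fun t ht => ⟨hf'.differentiableAt (isOpen_interior.mem_nhds ht),
      hg'.differentiableAt (isOpen_interior.mem_nhds ht)⟩
  have hsub : MonotoneOn (g - f) D :=
    monotoneOn_of_deriv_nonneg hD (hg.sub hf) (hg'.sub hf') fun t ht => by
      obtain ⟨hft, hgt⟩ := hdiff t ht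
      rw [deriv_sub hgt hft]
      linarith [le_abs_self (deriv f t), hfg t ht]
  have hadd : MonotoneOn (g + f) D :=
    monotoneOn_of_deriv_nonneg hD (hg.add hf) (hg'.add hf') fun t ht => by
      obtain ⟨hft, hgt⟩ := hdiff t ht
      rw [deriv_add hgt hft]
      linarith [neg_abs_le (deriv f t), hfg t ht]
  have h₁ := hsub hu hv huv
  have h₂ := hadd hu hv huv
  simp only [Pi.sub_apply, Pi.add_apply] at h₁ h₂
  rw [abs_le]
  constructor <;> linarith

theorem hasDerivAt_mul_add_div_mul_rpow (C : ℝ) {α t : ℝ} (hα : α ≠ 0) (ht : 0 < t) :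
    HasDerivAt (fun s => C * s + C / α * s ^ α) (C * (1 + t ^ (α - 1))) t := by
  have h : HasDerivAt (fun s => C * s + C / α * s ^ α) (C * 1 + C / α * (α * t ^ (α - 1))) t :=
    ((hasDerivAt_id' t).const_mul C).add
      ((Real.hasDerivAt_rpow_const (Or.inl ht.ne')).const_mul (C / α))
  exact h.congr_deriv (by field_simp)

theorem continuous_mul_add_div_mul_rpow (C : ℝ) {α : ℝ} (hα : 0 ≤ α) :
    Continuous fun s : ℝ => C * s + C / α * s ^ α :=
  (continuous_const.mul continuous_id).add (continuous_const.mul (Real.continuous_rpow_const hα))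

theorem abs_sub_le_of_abs_deriv_le_rpow {α C : ℝ} (hα : 0 < α) {y : ℝ → ℝ}
    (hcont : ContinuousOn y (Ici 0)) (hdiff : ∀ t : ℝ, 0 < t → DifferentiableAt ℝ y t)
    (hbound : ∀ t : ℝ, 0 < t → |deriv y t| ≤ C * (1 + t ^ (α - 1))) {u v : ℝ}
    (hu : 0 ≤ u) (huv : u ≤ v) :
    |y v - y u| ≤ C * (v - u) + C / α * (v ^ α - u ^ α) := by
  have hF : ∀ t ∈ interior (Ici (0 : ℝ)),
      HasDerivAt (fun s => C * s + C / α * s ^ α) (C * (1 + t ^ (α - 1))) t :=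
    fun t ht => hasDerivAt_mul_add_div_mul_rpow C hα.ne' (interior_Ici.subset ht)
  have hmaj := abs_sub_le_sub_of_abs_deriv_le_deriv (convex_Ici 0) hcont
    (continuous_mul_add_div_mul_rpow C hα.le).continuousOn
    (fun t ht => (hdiff t (interior_Ici.subset ht)).differentiableWithinAt)
    (fun t ht => (hF t ht).differentiableAt.differentiableWithinAt)
    (fun t ht => (hF t ht).deriv ▸ hbound t (interior_Ici.subset ht))
    (mem_Ici.mpr hu) (mem_Ici.mpr (hu.trans huv)) huv
  linarith

theorem stmt_2_general (α C₀ Δt : ℝ) (hα : α ∈ Set.Ioo (0 : ℝ) 1)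
    (hΔt : 0 < Δt) (n : ℕ) (hn : 2 ≤ n)
    (y : ℝ → ℝ)
    (hcont : ContinuousOn y (Set.Ici (0 : ℝ)))
    (hdiff : ∀ t : ℝ, 0 < t → DifferentiableAt ℝ y t)
    (hbound : ∀ t : ℝ, 0 < t → |deriv y t| ≤ C₀ * (1 + t ^ (α - 1))) :
    |2 * y (((n : ℝ) - 1) * Δt) - y (((n : ℝ) - 2) * Δt) - y ((n : ℝ) * Δt)|
      ≤ 2 * C₀ * Δt + (C₀ / α) * (((n : ℝ) * Δt) ^ α - (((n : ℝ) - 2) * Δt) ^ α) := by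
  have hn' : (2 : ℝ) ≤ n := by exact_mod_cast hn
  set a := ((n : ℝ) - 2) * Δt
  set b := ((n : ℝ) - 1) * Δt
  set c := (n : ℝ) * Δt
  have ha : 0 ≤ a := mul_nonneg (by linarith) hΔt.le
  have hab : a ≤ b := mul_le_mul_of_nonneg_right (by linarith) hΔt.le
  have hbc : b ≤ c := mul_le_mul_of_nonneg_right (by linarith) hΔt.le
  have hba := abs_sub_le_of_abs_deriv_le_rpow hα.1 hcont hdiff hbound ha hab
  have hcb := abs_sub_le_of_abs_deriv_le_rpow hα.1 hcont hdiff hbound (ha.trans hab) hbc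
  calc |2 * y b - y a - y c| = |(y b - y a) - (y c - y b)| := by ring_nf
    _ ≤ |y b - y a| + |y c - y b| := abs_sub _ _
    _ ≤ 2 * C₀ * Δt + C₀ / α * (c ^ α - a ^ α) := by
      have hca : c - a = 2 * Δt := by ring
      linear_combination hba + hcb + C₀ * hca

/-- Intermediate estimate in the proof of the paper's Lemma 1 (extrapolation error):
`|2y(t_{n−1}) − y(t_{n−2}) − y(tₙ)| ≤ 2C₀Δt + (C₀/α)(tₙ^α − t_{n−2}^α)`. -/
theorem stmt_2 (α C₀ Δt : ℝ) (hα : α ∈ Set.Ioo (0 : ℝ) 1) (hC₀ : 0 < C₀)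
    (hΔt : 0 < Δt) (n : ℕ) (hn : 2 ≤ n)
    (y : ℝ → ℝ)
    (hcont : ContinuousOn y (Set.Ici (0 : ℝ)))
    (hdiff : ∀ t : ℝ, 0 < t → DifferentiableAt ℝ y t)
    (hbound : ∀ t : ℝ, 0 < t → |deriv y t| ≤ C₀ * (1 + t ^ (α - 1))) :
    |2 * y (((n : ℝ) - 1) * Δt) - y (((n : ℝ) - 2) * Δt) - y ((n : ℝ) * Δt)|
      ≤ 2 * C₀ * Δt + (C₀ / α) * (((n : ℝ) * Δt) ^ α - (((n : ℝ) - 2) * Δt) ^ α) :=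
  stmt_2_general α C₀ Δt hα hΔt n hn y hcont hdiff hbound
end
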